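/- Let X be a separable Banach space and let Q, R : X → X be mutually polar retractions with int(range Q) ≠ ∅ and dim(range R) = 1. Then Q is subadditive with respect to the order induced by range Q, and R is subadditive with respect to the order induced by range R. -/

import Mathlib

open Set

variable {X : Type*} [NormedAddCommGroup X] [NormedSpace ℝ X]

/-- A retraction: continuous, positively homogeneous, idempotent map whose range is a
nonzero closed convex cone, mapping points outside the range to the boundary of the range. -/
def IsRetraction (T : X → X) : Prop :=
  Continuous T ∧
  (∀ t : ℝ, 0 ≤ t → ∀ x, T (t • x) = t • T x) ∧
  (∀ x, T (T x) = T x) ∧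
  Set.range T ≠ {0} ∧
  IsClosed (Set.range T) ∧
  Convex ℝ (Set.range T) ∧
  (∀ t : ℝ, 0 ≤ t → ∀ y ∈ Set.range T, t • y ∈ Set.range T) ∧
  (∀ x, x ∉ Set.range T → T x ∈ frontier (Set.range T))

/-- Mutually polar retractions: Q + R = I and QR = RQ = 0. -/
def MutuallyPolar (Q R : X → X) : Prop :=
  IsRetraction Q ∧ IsRetraction R ∧
  (∀ x, Q x + R x = x) ∧ (∀ x, Q (R x) = 0) ∧ (∀ x, R (Q x) = 0)

/-- M and N are transversal with transversal line Δ. -/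
def TransversalWith (M N : Set X) (Δ : Submodule ℝ X) : Prop :=
  M ∩ N = {0} ∧
  (∃ d : X, d ≠ 0 ∧ Δ = Submodule.span ℝ {d}) ∧
  ((Δ : Set X) ∩ (M \ {0})).Nonempty ∧
  ((Δ : Set X) ∩ (N \ {0})).Nonempty ∧
  ((Δ : Set X) ∩ (interior M ∪ interior N)).Nonempty

/-- M and N are transversal cones. -/
def Transversal (M N : Set X) : Prop := ∃ Δ : Submodule ℝ X, TransversalWith M N Δ

/-!
The range `K` of `R` lies on a line, and the interior of `P = range Q` rules out `K` being the
whole line, so `K` is a ray `ℝ≥0 • d`; then `R (Q (-d)) = 0` forces `-d ∈ P`, i.e. `-K ⊆ P`.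
Both inequalities reduce to `R (p + k) ≤_K k` for `p ∈ P`, `k ∈ K`, applied to
`p = Q x + Q y`, `k = R x + R y`. For `p` in the interior of `P` this holds because otherwise
`Q (p + k) = p + (k - R (p + k))` would lie in `int P + P ⊆ int P`, whereas `Q` maps points
outside `P` to its boundary; it extends to all of `P = closure (int P)` by continuity of `R`.
-/

theorem exists_smul_eq_of_finrank_span_eq_one {𝕜 V : Type*} [DivisionRing 𝕜] [AddCommGroup V]
    [Module 𝕜 V] {s : Set V} (hs : Module.finrank 𝕜 (Submodule.span 𝕜 s) = 1) {d : V}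
    (hd : d ∈ s) (hd0 : d ≠ 0) {x : V} (hx : x ∈ s) : ∃ c : 𝕜, c • d = x := by
  have hspan := (finrank_eq_one_iff_of_nonzero' (⟨d, Submodule.subset_span hd⟩ :
    Submodule.span 𝕜 s) (by simpa using hd0)).1 hs
  obtain ⟨c, hc⟩ := hspan ⟨x, Submodule.subset_span hx⟩
  exact ⟨c, congrArg Subtype.val hc⟩

namespace IsRetraction

variable {T : X → X} (hT : IsRetraction T)
include hT

protected theorem continuous : Continuous T := hT.1

theorem map_smul {t : ℝ} (ht : 0 ≤ t) (x : X) : T (t • x) = t • T x := hT.2.1 t ht x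

theorem isClosed_range : IsClosed (range T) := hT.2.2.2.2.1

theorem convex_range : Convex ℝ (range T) := hT.2.2.2.2.2.1

theorem map_zero : T 0 = 0 := by
  simpa using hT.map_smul le_rfl 0

theorem apply_of_mem_range {y : X} (hy : y ∈ range T) : T y = y := by
  obtain ⟨x, rfl⟩ := hy
  exact hT.2.2.1 x

theorem exists_mem_range_ne_zero : ∃ k ∈ range T, k ≠ 0 :=
  ((nontrivial_iff_ne_singleton (s := range T) ⟨0, hT.map_zero⟩).2 hT.2.2.2.1).exists_ne 0

theorem smul_mem_range {t : ℝ} (ht : 0 ≤ t) {y : X} (hy : y ∈ range T) : t • y ∈ range T :=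
  hT.2.2.2.2.2.2.1 t ht y hy

theorem add_mem_range {y z : X} (hy : y ∈ range T) (hz : z ∈ range T) : y + z ∈ range T := by
  have hmid := hT.convex_range hy hz (by norm_num : (0 : ℝ) ≤ 2⁻¹) (by norm_num : (0 : ℝ) ≤ 2⁻¹)
    (by norm_num)
  simpa [smul_add, smul_smul] using hT.smul_mem_range zero_le_two hmid

theorem add_mem_interior_range {u y : X} (hu : u ∈ interior (range T)) (hy : y ∈ range T) :
    u + y ∈ interior (range T) := by
  refine interior_mono ?_
    ((isOpenMap_add_right y).image_interior_subset _ (mem_image_of_mem _ hu))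
  rintro _ ⟨z, hz, rfl⟩
  exact hT.add_mem_range hz hy

theorem apply_notMem_interior_range {x : X} (hx : x ∉ range T) :
    T x ∉ interior (range T) := by
  have hfr := hT.2.2.2.2.2.2.2 x hx
  rw [hT.isClosed_range.frontier_eq] at hfr
  exact hfr.2

end IsRetraction

namespace MutuallyPolar

variable {Q R : X → X} (h : MutuallyPolar Q R)
include h

theorem isRetraction_fst : IsRetraction Q := h.1

theorem isRetraction_snd : IsRetraction R := h.2.1

theorem snd_fst (x : X) : R (Q x) = 0 := h.2.2.2.2 x

theorem fst_eq_sub (x : X) : Q x = x - R x :=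
  eq_sub_of_add_eq (h.2.2.1 x)

theorem snd_eq_zero_of_mem_range_fst {x : X} (hx : x ∈ range Q) : R x = 0 := by
  obtain ⟨y, rfl⟩ := hx
  exact h.snd_fst y

theorem mem_range_fst_of_snd_eq_zero {x : X} (hx : R x = 0) : x ∈ range Q :=
  ⟨x, by rw [h.fst_eq_sub, hx, sub_zero]⟩

theorem eq_zero_of_mem_range_fst_of_mem_range_snd {x : X} (hQ : x ∈ range Q)
    (hR : x ∈ range R) : x = 0 := by
  rw [← h.isRetraction_snd.apply_of_mem_range hR, h.snd_eq_zero_of_mem_range_fst hQ]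

theorem zero_notMem_interior_range_fst : (0 : X) ∉ interior (range Q) := by
  intro h0
  obtain ⟨k, hk, hk0⟩ := h.isRetraction_snd.exists_mem_range_ne_zero
  have hlim : Filter.Tendsto (fun t : ℝ => t • k) (nhdsWithin 0 (Ioi 0)) (nhds 0) :=
    ((continuous_id.smul continuous_const).tendsto' 0 0 (zero_smul ℝ k)).mono_left
      nhdsWithin_le_nhds
  obtain ⟨t, htk, ht⟩ :=
    ((hlim.eventually (mem_interior_iff_mem_nhds.1 h0)).and self_mem_nhdsWithin).exists
  have hzero := h.eq_zero_of_mem_range_fst_of_mem_range_snd htk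
    (h.isRetraction_snd.smul_mem_range ht.le hk)
  exact hk0 ((smul_eq_zero.1 hzero).resolve_left (ne_of_gt ht))

theorem neg_notMem_range_snd {d : X} (hd : d ∈ range R)
    (hline : ∀ x ∈ range R, ∃ c : ℝ, c • d = x) (hint : (interior (range Q)).Nonempty) :
    -d ∉ range R := by
  intro hnd
  have hneg : ∀ x ∈ range R, -x ∈ range R := by
    intro x hx
    obtain ⟨c, rfl⟩ := hline x hx
    rcases le_or_gt c 0 with hc | hc
    · simpa using h.isRetraction_snd.smul_mem_range (neg_nonneg.2 hc) hd
    · simpa using h.isRetraction_snd.smul_mem_range hc.le hnd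
  obtain ⟨e, he⟩ := hint
  have hsum : e + Q (-e) = -R (-e) := by
    rw [h.fst_eq_sub]
    abel
  have hmem : -R (-e) ∈ interior (range Q) :=
    hsum ▸ h.isRetraction_fst.add_mem_interior_range he ⟨-e, rfl⟩
  have hzero := h.eq_zero_of_mem_range_fst_of_mem_range_snd (interior_subset hmem)
    (hneg _ ⟨-e, rfl⟩)
  exact h.zero_notMem_interior_range_fst (hzero ▸ hmem)

theorem exists_range_snd_eq_ray (hint : (interior (range Q)).Nonempty)
    (hdim : Module.finrank ℝ (Submodule.span ℝ (range R)) = 1) :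
    ∃ d ∈ range R, ∀ x ∈ range R, ∃ t : ℝ, 0 ≤ t ∧ t • d = x := by
  obtain ⟨d, hd, hd0⟩ := h.isRetraction_snd.exists_mem_range_ne_zero
  have hline : ∀ x ∈ range R, ∃ c : ℝ, c • d = x :=
    fun x hx => exists_smul_eq_of_finrank_span_eq_one hdim hd hd0 hx
  refine ⟨d, hd, fun x hx => ?_⟩
  obtain ⟨c, rfl⟩ := hline x hx
  refine ⟨c, not_lt.1 fun hc => h.neg_notMem_range_snd hd hline hint ?_, rfl⟩
  simpa [smul_smul, hc.ne] using
    h.isRetraction_snd.smul_mem_range (neg_nonneg.2 (inv_nonpos.2 hc.le)) hx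

theorem neg_mem_range_fst_of_ray {d : X}
    (hray : ∀ x ∈ range R, ∃ t : ℝ, 0 ≤ t ∧ t • d = x) : ∀ k ∈ range R, -k ∈ range Q := by
  obtain ⟨s, hs, hRd⟩ := hray (R (-d)) ⟨-d, rfl⟩
  have hQd : Q (-d) = (1 + s) • -d := by
    rw [h.fst_eq_sub, ← hRd]
    module
  have hRd0 : R (-d) = 0 := by
    have hkill := h.snd_fst (-d)
    rw [hQd, h.isRetraction_snd.map_smul (by linarith)] at hkill
    exact (smul_eq_zero.1 hkill).resolve_left (by linarith)
  rintro k hk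
  obtain ⟨t, ht, rfl⟩ := hray k hk
  simpa using h.isRetraction_fst.smul_mem_range ht (h.mem_range_fst_of_snd_eq_zero hRd0)

theorem sub_mem_range_snd_or_of_ray {d : X} (hd : d ∈ range R)
    (hray : ∀ x ∈ range R, ∃ t : ℝ, 0 ≤ t ∧ t • d = x) :
    ∀ k ∈ range R, ∀ r ∈ range R, k - r ∈ range R ∨ r - k ∈ range R := by
  intro k hk r hr
  obtain ⟨a, -, rfl⟩ := hray k hk
  obtain ⟨b, -, rfl⟩ := hray r hr
  rcases le_total b a with hba | hab
  · left
    simpa [sub_smul] using h.isRetraction_snd.smul_mem_range (sub_nonneg.2 hba) hd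
  · right
    simpa [sub_smul] using h.isRetraction_snd.smul_mem_range (sub_nonneg.2 hab) hd

variable (hneg : ∀ k ∈ range R, -k ∈ range Q)
  (htotal : ∀ k ∈ range R, ∀ r ∈ range R, k - r ∈ range R ∨ r - k ∈ range R)
include hneg htotal

theorem sub_snd_add_mem_range_snd_of_mem_interior {p k : X} (hp : p ∈ interior (range Q))
    (hk : k ∈ range R) : k - R (p + k) ∈ range R := by
  by_cases hpk : p + k ∈ range Q
  · rw [h.snd_eq_zero_of_mem_range_fst hpk, sub_zero]
    exact hk
  refine (htotal k hk _ ⟨_, rfl⟩).resolve_right fun hrk =>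
    h.isRetraction_fst.apply_notMem_interior_range hpk ?_
  rw [h.fst_eq_sub, add_sub_assoc]
  simpa using h.isRetraction_fst.add_mem_interior_range hp (hneg _ hrk)

theorem sub_snd_add_mem_range_snd (hint : (interior (range Q)).Nonempty) {p k : X}
    (hp : p ∈ range Q) (hk : k ∈ range R) : k - R (p + k) ∈ range R := by
  have hclosed : IsClosed {q | k - R (q + k) ∈ range R} := by
    have := h.isRetraction_snd.continuous
    exact h.isRetraction_snd.isClosed_range.preimage (by fun_prop)
  have hsub := closure_minimal
    (fun q hq => h.sub_snd_add_mem_range_snd_of_mem_interior hneg htotal hq hk) hclosed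
  rw [h.isRetraction_fst.convex_range.closure_interior_eq_closure_of_nonempty_interior hint,
    h.isRetraction_fst.isClosed_range.closure_eq] at hsub
  exact hsub hp

end MutuallyPolar

theorem stmt15_general (Q R : X → X) (h : MutuallyPolar Q R)
    (hint : (interior (Set.range Q)).Nonempty)
    (hdim : Module.finrank ℝ (Submodule.span ℝ (Set.range R)) = 1) :
    (∀ x y : X, Q x + Q y - Q (x + y) ∈ Set.range Q) ∧
    (∀ x y : X, R x + R y - R (x + y) ∈ Set.range R) := by
  obtain ⟨d, hd, hray⟩ := h.exists_range_snd_eq_ray hint hdim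
  have hneg := h.neg_mem_range_fst_of_ray hray
  have htotal := h.sub_mem_range_snd_or_of_ray hd hray
  have hR : ∀ x y, R x + R y - R (x + y) ∈ range R := by
    intro x y
    have hxy : Q x + Q y + (R x + R y) = x + y := by
      rw [h.fst_eq_sub, h.fst_eq_sub]
      abel
    simpa [hxy] using h.sub_snd_add_mem_range_snd hneg htotal hint
      (h.isRetraction_fst.add_mem_range ⟨x, rfl⟩ ⟨y, rfl⟩)
      (h.isRetraction_snd.add_mem_range ⟨x, rfl⟩ ⟨y, rfl⟩)
  refine ⟨fun x y => ?_, hR⟩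
  have hQ : Q x + Q y - Q (x + y) = -(R x + R y - R (x + y)) := by
    simp only [h.fst_eq_sub]
    abel
  exact hQ ▸ hneg _ (hR x y)

theorem stmt15 [CompleteSpace X] [TopologicalSpace.SeparableSpace X]
    (Q R : X → X) (h : MutuallyPolar Q R)
    (hint : (interior (Set.range Q)).Nonempty)
    (hdim : Module.finrank ℝ (Submodule.span ℝ (Set.range R)) = 1) :
    (∀ x y : X, Q x + Q y - Q (x + y) ∈ Set.range Q) ∧
    (∀ x y : X, R x + R y - R (x + y) ∈ Set.range R) :=
  stmt15_general Q R h hint hdim
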